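/- arXiv:2408.03226 — 4 statements merged into one kernel-verified Lean document; each statement's English description precedes it below -/
import Mathlib

section
/- Every countable discrete subgroup of the additive group of a normed space is a free Abelian group. Precisely: if X is a real normed vector space and A is a countable additive subgroup of X which is discrete in the norm topology, then A is a free ℤ-module. -/
/-!
Enumerate `A` as `a₀, a₁, …` and let `Bₙ = A ∩ span_ℝ {aᵢ | i < n}`. Each `Bₙ` is a discrete
subgroup of a finite-dimensional space, hence finitely generated. Since a real subspace is closed
under division by nonzero integers, `Bₙ₊₁ / Bₙ` is torsion-free, hence free, so lifting one of its
bases extends a basis of `Bₙ` to a basis of `Bₙ₊₁`. The union of these nested bases is a basis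
of `A`.
-/

open Set Submodule

namespace Submodule

section Ring

variable {R M : Type*} [Ring R] [AddCommGroup M] [Module R M]

theorem exists_linearIndepOn_mkQ_sup_span_eq [Nontrivial R] {N P : Submodule R M} (hNP : N ≤ P)
    [Module.Free R (P.map N.mkQ)] :
    ∃ t, LinearIndepOn R N.mkQ t ∧ N ⊔ span R t = P := by
  let b := Module.Free.chooseBasis R (P.map N.mkQ)
  choose x _ hx using fun i => mem_map.1 (b i).2
  have hlift : N.mkQ ∘ x = (P.map N.mkQ).subtype ∘ b := funext hx
  have hindep : LinearIndependent R (N.mkQ ∘ x) :=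
    hlift ▸ b.linearIndependent.map' _ (ker_subtype _)
  refine ⟨range x, (linearIndepOn_range_iff hindep.injective.of_comp _).2 hindep, ?_⟩
  have hmap : (span R (range x)).map N.mkQ = P.map N.mkQ := by
    rw [map_span, ← range_comp, hlift, range_comp, ← map_span, b.span_eq, map_top,
      range_subtype]
  rw [← comap_map_mkQ, hmap, comap_map_mkQ, sup_eq_right.2 hNP]

theorem free_iSup_of_free_map_mkQ [Nontrivial R] (B : ℕ → Submodule R M) (hB : Monotone B)
    (hB0 : B 0 = ⊥) [∀ n, Module.Free R ((B (n + 1)).map (B n).mkQ)] :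
    Module.Free R ↥(⨆ n, B n) := by
  choose t ht_indep ht_sup using fun n : ℕ =>
    exists_linearIndepOn_mkQ_sup_span_eq (hB n.le_succ)
  let s n := ⋃ k < n, t k
  have hs : ∀ n, LinearIndepOn R id (s n) ∧ span R (s n) = B n := by
    intro n
    induction n with
    | zero => simp [s, hB0]
    | succ n ih =>
      rw [show s (n + 1) = s n ∪ t n from biUnion_lt_succ t n]
      refine ⟨ih.1.union_id_of_quotient (ih.2 ▸ subset_span) (ht_indep n), ?_⟩
      rw [span_union, ih.2, ht_sup]
  have hmono : Monotone s := fun m n hmn =>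
    biUnion_mono (fun k hk => lt_of_lt_of_le hk hmn) fun _ _ => subset_rfl
  have hindep : LinearIndepOn R id (⋃ n, s n) :=
    linearIndepOn_iUnion_of_directed hmono.directed_le fun n => (hs n).1
  have hspan : span R (⋃ n, s n) = ⨆ n, B n := by
    rw [span_iUnion]
    exact iSup_congr fun n => (hs n).2
  rw [← hspan, ← Subtype.range_coe (s := ⋃ n, s n)]
  exact Module.Free.of_basis (Module.Basis.span hindep)

theorem isTorsionFree_map_mkQ [Nontrivial R] {N P : Submodule R M}
    (hpure : ∀ x ∈ P, ∀ r : R, r ≠ 0 → r • x ∈ N → x ∈ N) :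
    Module.IsTorsionFree R (P.map N.mkQ) := by
  refine .of_smul_eq_zero fun r y hry => or_iff_not_imp_left.2 fun hr => ?_
  obtain ⟨x, hxP, hxy⟩ := mem_map.1 y.2
  have hrx : r • x ∈ N := by
    rw [← Quotient.mk_eq_zero, ← mkQ_apply, map_smul, hxy, ← coe_smul, hry, coe_zero]
  ext
  rw [← hxy, mkQ_apply, coe_zero, Quotient.mk_eq_zero]
  exact hpure x hxP r hr hrx

end Ring

theorem mem_of_zsmul_mem {K V : Type*} [DivisionRing K] [CharZero K] [AddCommGroup V]
    [Module K V] {W : Submodule K V} {x : V} {k : ℤ} (hk : k ≠ 0) (hkx : k • x ∈ W) : x ∈ W := by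
  rw [← Int.cast_smul_eq_zsmul K] at hkx
  exact (smul_mem_iff W (Int.cast_ne_zero.2 hk)).1 hkx

section Normed

variable {X : Type*} [NormedAddCommGroup X] [NormedSpace ℝ X]

theorem finite_of_discrete_of_le_finiteDimensional (L : Submodule ℤ X) [DiscreteTopology L]
    (V : Submodule ℝ X) [FiniteDimensional ℝ V] (hLV : L ≤ V.restrictScalars ℤ) :
    Module.Finite ℤ L := by
  let L' : Submodule ℤ V := ZLattice.comap ℝ L V.subtype
  have : DiscreteTopology L' :=
    ZLattice.comap_discreteTopology _ _ continuous_subtype_val Subtype.val_injective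
  let e : L' ≃ₗ[ℤ] L := comapSubtypeEquivOfLe (q := V.restrictScalars ℤ) hLV
  exact .equiv e

theorem free_of_countable_of_discreteTopology (L : Submodule ℤ X) [Countable L]
    [DiscreteTopology L] : Module.Free ℤ L := by
  obtain ⟨e, he⟩ := exists_surjective_nat L
  let V : ℕ → Submodule ℝ X := fun n => span ℝ ((↑) ∘ e '' Iio n)
  let B : ℕ → Submodule ℤ X := fun n => L ⊓ (V n).restrictScalars ℤ
  have hB : Monotone B := fun m n hmn =>
    inf_le_inf_left L (span_mono (image_mono (Iio_subset_Iio hmn)))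
  have hB0 : B 0 = ⊥ := by simp [B, V]
  have hBL : ⨆ n, B n = L := by
    refine le_antisymm (iSup_le fun n => inf_le_left) fun x hx => ?_
    obtain ⟨i, hi⟩ := he ⟨x, hx⟩
    refine mem_iSup_of_mem (i + 1) ⟨hx, subset_span ⟨i, Nat.lt_succ_self i, ?_⟩⟩
    simp [hi]
  have (n : ℕ) : Module.Free ℤ ((B (n + 1)).map (B n).mkQ) := by
    have : DiscreteTopology (B (n + 1)) := .of_subset ‹_› inf_le_left
    have : FiniteDimensional ℝ (V (n + 1)) := .span_of_finite ℝ ((finite_Iio _).image _)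
    have := finite_of_discrete_of_le_finiteDimensional (B (n + 1)) (V (n + 1)) inf_le_right
    have := isTorsionFree_map_mkQ (N := B n) (P := B (n + 1))
      fun x hx k hk hkx => ⟨hx.1, mem_of_zsmul_mem hk hkx.2⟩
    infer_instance
  exact hBL ▸ free_iSup_of_free_map_mkQ B hB hB0

end Normed

end Submodule

/-- Every countable discrete subgroup of the additive group of a real normed
space is a free Abelian group (free `ℤ`-module). -/
theorem countable_discrete_subgroup_of_normed_space_free
    (X : Type*) [NormedAddCommGroup X] [NormedSpace ℝ X]
    (A : AddSubgroup X) [Countable A] [DiscreteTopology A] :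
    Module.Free ℤ A := by
  have : Countable (AddSubgroup.toIntSubmodule A) := ‹Countable A›
  have : DiscreteTopology (AddSubgroup.toIntSubmodule A) := ‹DiscreteTopology A›
  exact (AddSubgroup.toIntSubmodule A).free_of_countable_of_discreteTopology
end

section
/- Every discrete subgroup of the additive group of a normed space is ℵ₁-free: if X is a real normed vector space and A is an additive subgroup of X which is discrete in the norm topology, then every countable subgroup of A is a free ℤ-module. -/
/-!
Enumerate the countable group `B` as `b₀, b₁, …` and let `Vₙ` be the real span of `b₀, …, bₙ₋₁`.
The groups `Wₙ = B ∩ Vₙ` increase and exhaust `B`. Each `Wₙ` is a discrete subgroup of the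
finite-dimensional space `Vₙ`, hence finitely generated, and `Wₙ₊₁ / Wₙ` is torsion-free because
`Vₙ` is closed under division by nonzero integers. So `Wₙ₊₁ / Wₙ` is free, `Wₙ` has a free
complement `Cₙ` in `Wₙ₊₁`, and `B` is the internal direct sum of the `Cₙ`.
-/

open Submodule

theorem iSupIndep_of_disjoint_iSup_lt {α : Type*} [CompleteLattice α] [IsModularLattice α]
    [IsCompactlyGenerated α] {f : ℕ → α} (h : ∀ n, Disjoint (f n) (⨆ j < n, f j)) :
    iSupIndep f := by
  classical
  refine iSupIndep_iff_supIndep.2 fun s => ?_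
  induction s using Finset.induction_on_max with
  | empty => exact Finset.supIndep_empty f
  | insert a s hlt ih =>
    exact ih.insert <| (h a).mono_right <| Finset.sup_le fun j hj => le_biSup f (hlt j hj)

section Ring

variable {R M : Type*} [Ring R] [AddCommGroup M] [Module R M]

theorem Submodule.exists_isCompl_of_projective_quotient (p : Submodule R M)
    [Module.Projective R (M ⧸ p)] : ∃ q : Submodule R M, IsCompl p q := by
  obtain ⟨s, hs⟩ := Module.projective_lifting_property p.mkQ LinearMap.id p.mkQ_surjective
  have hsec : ∀ y, p.mkQ (s y) = y := LinearMap.congr_fun hs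
  have hmem : ∀ x, x - s (p.mkQ x) ∈ p := fun x => by
    rw [← Submodule.Quotient.mk_eq_zero, ← p.mkQ_apply, map_sub, hsec, sub_self]
  refine ⟨LinearMap.ker (LinearMap.codRestrict p (LinearMap.id - s ∘ₗ p.mkQ) hmem),
    LinearMap.isCompl_of_proj fun x => ?_⟩
  ext
  simp [(Submodule.Quotient.mk_eq_zero p).2 x.2]

theorem Submodule.exists_free_sup_eq_of_le {p q : Submodule R M} (hpq : p ≤ q)
    (hfree : Module.Free R (q ⧸ p.comap q.subtype)) :
    ∃ C : Submodule R M, Disjoint p C ∧ p ⊔ C = q ∧ Module.Free R C := by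
  obtain ⟨D, hD⟩ := (p.comap q.subtype).exists_isCompl_of_projective_quotient
  have hp : (p.comap q.subtype).map q.subtype = p := by
    rw [map_comap_subtype, inf_eq_right.2 hpq]
  refine ⟨D.map q.subtype, ?_, ?_, ?_⟩
  · rw [← hp]
    exact disjoint_map q.injective_subtype hD.disjoint
  · rw [← hp, ← map_sup, hD.sup_eq_top, map_top, range_subtype]
  · exact .of_equiv ((quotientEquivOfIsCompl _ _ hD).trans
      (equivMapOfInjective _ q.injective_subtype D))

theorem Module.free_of_chain (W : ℕ → Submodule R M) (hmono : Monotone W) (h0 : W 0 = ⊥)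
    (htop : ⨆ n, W n = ⊤)
    (hfree : ∀ n, Module.Free R (W (n + 1) ⧸ (W n).comap (W (n + 1)).subtype)) :
    Module.Free R M := by
  choose C hdisj hsup hCfree using fun n => exists_free_sup_eq_of_le (hmono n.le_succ) (hfree n)
  have hW : ∀ n, W n = ⨆ j < n, C j := by
    intro n
    induction n with
    | zero => simp [h0]
    | succ n ih => rw [Nat.iSup_lt_succ, ← ih, hsup]
  have hindep : iSupIndep C :=
    iSupIndep_of_disjoint_iSup_lt fun n => (hW n ▸ hdisj n).symm
  have hC : ⨆ n, C n = ⊤ :=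
    top_unique <| htop ▸ iSup_le fun n => hW n ▸ iSup₂_le fun j _ => le_iSup C j
  have hinternal := DirectSum.isInternal_submodule_of_iSupIndep_of_iSup_eq_top hindep hC
  exact .of_basis (hinternal.collectedBasis fun n => (hCfree n).chooseBasis)

end Ring

namespace AddSubgroup

section Module

variable {X : Type*} [AddCommGroup X] [Module ℝ X]

def comapSubspace (B : AddSubgroup X) (V : Submodule ℝ X) : Submodule ℤ B :=
  (V.restrictScalars ℤ).comap B.subtype.toIntLinearMap

variable {B : AddSubgroup X} {V V' : Submodule ℝ X}

@[simp]
theorem mem_comapSubspace {x : B} : x ∈ B.comapSubspace V ↔ (x : X) ∈ V := Iff.rfl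

theorem comapSubspace_mono (h : V ≤ V') : B.comapSubspace V ≤ B.comapSubspace V' :=
  fun _ hx => h hx

@[simp]
theorem comapSubspace_bot : B.comapSubspace ⊥ = ⊥ := by
  ext x
  simp

theorem zsmul_mem_comapSubspace_iff {k : ℤ} (hk : k ≠ 0) {x : B} :
    k • x ∈ B.comapSubspace V ↔ x ∈ B.comapSubspace V := by
  rw [mem_comapSubspace, mem_comapSubspace, coe_zsmul, ← Int.cast_smul_eq_zsmul ℝ,
    V.smul_mem_iff (Int.cast_ne_zero.2 hk)]

end Module

section Normed

variable {X : Type*} [NormedAddCommGroup X] [NormedSpace ℝ X] {B : AddSubgroup X}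
  {V V' : Submodule ℝ X}

theorem finite_comapSubspace [DiscreteTopology B] [FiniteDimensional ℝ V] :
    Module.Finite ℤ (B.comapSubspace V) := by
  let L : Submodule ℤ V := (toIntSubmodule B).comap ((V.subtype).restrictScalars ℤ)
  -- finitely generated by `instModuleFinite_of_discrete_submodule`
  have : DiscreteTopology L := DiscreteTopology.preimage_of_continuous_injective (B : Set X)
    continuous_subtype_val Subtype.val_injective
  exact Module.Finite.equiv
    { toFun x := ⟨⟨x.1, x.2⟩, x.1.2⟩
      invFun y := ⟨⟨y.1, y.2⟩, y.1.2⟩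
      map_add' _ _ := rfl
      map_smul' _ _ := rfl
      left_inv _ := rfl
      right_inv _ := rfl : L ≃ₗ[ℤ] B.comapSubspace V }

theorem free_quotient_comapSubspace [DiscreteTopology B] [FiniteDimensional ℝ V'] :
    Module.Free ℤ
      (B.comapSubspace V' ⧸ (B.comapSubspace V).comap (B.comapSubspace V').subtype) := by
  have := finite_comapSubspace (B := B) (V := V')
  have : Module.IsTorsionFree ℤ
      (B.comapSubspace V' ⧸ (B.comapSubspace V).comap (B.comapSubspace V').subtype) := by
    refine .of_smul_eq_zero fun k y hy => or_iff_not_imp_left.2 fun hk => ?_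
    obtain ⟨x, rfl⟩ := Submodule.Quotient.mk_surjective _ y
    rw [← Submodule.Quotient.mk_smul] at hy
    rw [Submodule.Quotient.mk_eq_zero] at hy ⊢
    exact (zsmul_mem_comapSubspace_iff hk).1 hy
  infer_instance

end Normed

end AddSubgroup

/-- Every discrete subgroup of the additive group of a real normed space is
`ℵ₁`-free: every countable subgroup of it is a free `ℤ`-module. -/
theorem discrete_subgroup_of_normed_space_aleph_one_free
    (X : Type*) [NormedAddCommGroup X] [NormedSpace ℝ X]
    (A : AddSubgroup X) [DiscreteTopology A]
    (B : AddSubgroup X) (hBA : B ≤ A) [Countable B] :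
    Module.Free ℤ B := by
  classical
  have : DiscreteTopology B := .of_subset (inferInstanceAs (DiscreteTopology A)) hBA
  obtain ⟨e, he⟩ := exists_surjective_nat B
  let V : ℕ → Submodule ℝ X := fun n =>
    span ℝ ((Finset.range n).image (fun i => (e i : X)) : Set X)
  refine Module.free_of_chain (fun n => B.comapSubspace (V n))
    (fun m n hmn => AddSubgroup.comapSubspace_mono (span_mono (by gcongr))) (by simp [V]) ?_
    fun n => AddSubgroup.free_quotient_comapSubspace
  refine eq_top_iff.2 fun x _ => ?_
  obtain ⟨k, rfl⟩ := he x
  exact mem_iSup_of_mem (k + 1)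
    (subset_span (Finset.mem_coe.2 (Finset.mem_image_of_mem _ (Finset.self_mem_range_succ k))))
end

section
/- Let κ be an uncountable regular cardinal and let A be a κ-free Abelian group of cardinality κ. Then the following are equivalent: (1) A is a free ℤ-module; (2) for every representation of A as the union of a continuous increasing chain (A_α)_{α<κ} of subgroups indexed by the ordinals below κ, with each A_α of cardinality less than κ, A_α ⊆ A_β whenever α ≤ β, and A_β = ⋃_{α<β} A_α for every limit ordinal β < κ, the set {α < κ : A/A_α is κ-free} contains a subset D of the ordinals below κ which is closed unbounded (i.e., D is unbounded in the ordinals below κ and contains the supremum of each of its nonempty bounded-below-κ subsets with limit supremum). -/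
/-!
If `A` has a basis `b`, the indices `α` for which `C α` contains every basis vector in the
support of each of its elements form a club (a closing-off argument, using that `κ` is regular
and uncountable). For such `α`, `C α` is spanned by the basis vectors it contains, so `A ⧸ C α`
is isomorphic to the span of the remaining basis vectors, a subgroup of `A`, and is `κ`-free.

Conversely, filter `A` by the subgroups generated by initial segments of a well-order of `A` of
type `κ`, and let `D` be the resulting club. For `β ∈ D` with successor `β⁺` in `D`, the quotient
`C β⁺ ⧸ C β` embeds into the `κ`-free group `A ⧸ C β` and has size `< κ`, so it is free and `C β`
has a free complement `F β` in `C β⁺`. Closedness of `D` and continuity of the chain show that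
`A` is the direct sum of the free groups `C (min D)` and `F β`, `β ∈ D`.
-/

open Cardinal

def IsKappaFree (κ : Cardinal) (G : Type*) [AddCommGroup G] : Prop :=
  ∀ B : AddSubgroup G, Cardinal.mk B < κ → Module.Free ℤ B

def IsClubIn (D : Set Ordinal) (o : Ordinal) : Prop :=
  D ⊆ Set.Iio o ∧ (∀ α < o, ∃ β ∈ D, α ≤ β) ∧
    ∀ S ⊆ D, S.Nonempty → sSup S < o → Order.IsSuccLimit (sSup S) → sSup S ∈ D

universe u

open Order

section KappaFree

variable {κ : Cardinal.{u}} {G H : Type u} [AddCommGroup G] [AddCommGroup H]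

theorem IsKappaFree.of_injective (hH : IsKappaFree κ H) (f : G →+ H)
    (hf : Function.Injective f) : IsKappaFree κ G := by
  intro B hB
  let e : B ≃+ B.map f := B.equivMapOfInjective f hf
  have := hH (B.map f) (by rwa [← mk_congr e.toEquiv])
  exact .of_equiv e.symm.toIntLinearEquiv

theorem IsKappaFree.free (hG : IsKappaFree κ G) (hcard : #G < κ) : Module.Free ℤ G := by
  have := hG ⊤ (by rwa [mk_congr AddSubgroup.topEquiv.toEquiv])
  exact .of_equiv (AddSubgroup.topEquiv (G := G)).toIntLinearEquiv

theorem Module.Basis.span_image_setOf_mem_eq {ι R M : Type*} [Semiring R] [AddCommMonoid M]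
    [Module R M] (b : Basis ι R M) {p : Submodule R M}
    (hp : ∀ x ∈ p, ∀ i ∈ (b.repr x).support, b i ∈ p) :
    Submodule.span R (b '' {i | b i ∈ p}) = p := by
  refine le_antisymm (Submodule.span_le.2 ?_) fun x hx => ?_
  · rintro _ ⟨i, hi, rfl⟩
    exact hi
  · exact Submodule.span_mono (Set.image_mono fun i hi => hp x hx i hi) (b.mem_span_repr_support x)

theorem IsKappaFree.quotient_of_basis {ι : Type*} (hG : IsKappaFree κ G)
    (b : Module.Basis ι ℤ G) (S : AddSubgroup G)
    (hS : ∀ x ∈ S, ∀ i ∈ (b.repr x).support, b i ∈ S) : IsKappaFree κ (G ⧸ S) := by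
  have hspan := b.span_image_setOf_mem_eq (p := AddSubgroup.toIntSubmodule S) hS
  have hcompl : IsCompl (AddSubgroup.toIntSubmodule S) (Submodule.span ℤ (b '' {i | b i ∈ S}ᶜ)) :=
    hspan ▸ b.linearIndependent.isCompl_span_image b.span_eq isCompl_compl
  let e := Submodule.quotientEquivOfIsCompl _ _ hcompl
  exact hG.of_injective ((Submodule.subtype _).comp e.toLinearMap).toAddMonoidHom
    (Subtype.val_injective.comp e.injective)

end KappaFree

theorem Ordinal.exists_isSuccLimit_iterate {κ : Cardinal.{u}} (hreg : κ.IsRegular) (hunc : ℵ₀ < κ)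
    {f : Ordinal.{u} → Ordinal.{u}} (hf : ∀ α < κ.ord, α < f α ∧ f α < κ.ord)
    {α₀ : Ordinal.{u}} (hα₀ : α₀ < κ.ord) :
    ∃ β < κ.ord, IsSuccLimit β ∧ (∀ n, f^[n] α₀ < β) ∧ ∀ α < β, ∃ n, α < f^[n] α₀ := by
  have hlt : ∀ n, f^[n] α₀ < κ.ord := by
    intro n
    induction n with
    | zero => exact hα₀
    | succ n ih => rw [Function.iterate_succ_apply']; exact (hf _ ih).2
  have hstep : ∀ n, f^[n] α₀ < f^[n + 1] α₀ := fun n => by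
    rw [Function.iterate_succ_apply']; exact (hf _ (hlt n)).1
  have hbdd : BddAbove (Set.range fun n => f^[n] α₀) := Ordinal.bddAbove_of_small
  have hlt_sup : ∀ n, f^[n] α₀ < ⨆ n, f^[n] α₀ := fun n =>
    (hstep n).trans_le (le_ciSup hbdd (n + 1))
  refine ⟨⨆ n, f^[n] α₀, ?_, ?_, hlt_sup, fun α hα => (lt_ciSup_iff hbdd).1 hα⟩
  · refine Ordinal.lift_iSup_lt_of_lt_cof ?_ hlt
    simpa [hreg.cof_ord] using hunc
  · by_contra hlim
    obtain ⟨n, hn⟩ := exists_eq_ciSup_of_not_isSuccLimit hbdd hlim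
    exact (hlt_sup n).ne hn

section Club

-- The junk value `sInf ∅ = 0` is taken when no element of `D` exceeds `β`.
noncomputable def nextIn (D : Set Ordinal) (β : Ordinal) : Ordinal :=
  sInf {δ ∈ D | β < δ}

variable {D : Set Ordinal} {o β δ : Ordinal}

theorem nextIn_mem_of_lt (hδ : δ ∈ D) (h : β < δ) : nextIn D β ∈ D ∧ β < nextIn D β :=
  csInf_mem (s := {δ ∈ D | β < δ}) ⟨δ, hδ, h⟩

theorem nextIn_le (hδ : δ ∈ D) (h : β < δ) : nextIn D β ≤ δ :=
  csInf_le' (s := {δ ∈ D | β < δ}) ⟨hδ, h⟩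

theorem IsClubIn.exists_gt (hD : IsClubIn D o) (ho : IsSuccLimit o) (hβ : β < o) :
    ∃ δ ∈ D, β < δ :=
  let ⟨δ, hδ, h⟩ := hD.2.1 _ (ho.succ_lt hβ)
  ⟨δ, hδ, (lt_succ β).trans_le h⟩

theorem IsClubIn.nonempty (hD : IsClubIn D o) (ho : 0 < o) : D.Nonempty :=
  let ⟨δ, hδ, _⟩ := hD.2.1 0 ho
  ⟨δ, hδ⟩

theorem IsClubIn.exists_nextIn_eq_or_isSuccLimit (hD : IsClubIn D o) (hβ : β ∈ D)
    (hmin : sInf D < β) :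
    (∃ γ ∈ D, γ < β ∧ nextIn D γ = β) ∨ (IsSuccLimit β ∧ ∀ α < β, ∃ γ ∈ D, α < γ ∧ γ < β) := by
  set S := D ∩ Set.Iio β
  have hne : S.Nonempty := ⟨sInf D, csInf_mem ⟨β, hβ⟩, hmin⟩
  have hbdd : BddAbove S := ⟨β, fun γ hγ => hγ.2.le⟩
  have hσβ : sSup S ≤ β := csSup_le hne fun γ hγ => hγ.2.le
  rcases hσβ.lt_or_eq with hσβ | hσβ
  · have hσD : sSup S ∈ D := by
      by_cases hlim : IsSuccLimit (sSup S)
      · exact hD.2.2 S Set.inter_subset_left hne (hσβ.trans (hD.1 hβ)) hlim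
      · exact (csSup_mem_of_not_isSuccLimit hne hbdd hlim).1
    refine .inl ⟨sSup S, hσD, hσβ, (nextIn_le hβ hσβ).antisymm (not_lt.1 fun hlt => ?_)⟩
    have hnext := nextIn_mem_of_lt hβ hσβ
    exact (le_csSup hbdd ⟨hnext.1, hlt⟩).not_gt hnext.2
  · refine .inr ⟨hσβ ▸ by_contra fun hlim => ?_, fun α hα => ?_⟩
    · exact (csSup_mem_of_not_isSuccLimit hne hbdd hlim).2.ne hσβ
    · obtain ⟨γ, hγ, hαγ⟩ := exists_lt_of_lt_csSup hne (hσβ ▸ hα)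
      exact ⟨γ, hγ.1, hαγ, hγ.2⟩

theorem IsClubIn.le_sup_iSup (hD : IsClubIn D o) {L : Type*} [CompleteLattice L]
    {P : Ordinal → L} {F : D → L}
    (hmono : ∀ α β, α ≤ β → β < o → P α ≤ P β)
    (hcont : ∀ β < o, IsSuccLimit β → P β ≤ ⨆ α < β, P α)
    (hnext : ∀ γ : D, P (nextIn D γ) ≤ P γ ⊔ F γ) (β : D) :
    P β ≤ P (sInf D) ⊔ ⨆ (γ : D) (_ : γ < β), F γ := by
  set T : D → L := fun β => P (sInf D) ⊔ ⨆ (γ : D) (_ : γ < β), F γ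
  have hT : Monotone T := fun γ β hγβ =>
    sup_le_sup_left (iSup₂_le fun δ hδ => le_iSup₂_of_le (f := fun (δ : D) (_ : δ < β) => F δ) δ
      (lt_of_lt_of_le hδ hγβ) le_rfl) _
  induction β using WellFoundedLT.induction with
  | ind β IH =>
  obtain ⟨β, hβ⟩ := β
  rcases (csInf_le' hβ).lt_or_eq with hmin | hmin
  · rcases hD.exists_nextIn_eq_or_isSuccLimit hβ hmin with ⟨γ, hγ, hγβ, rfl⟩ | ⟨hlim, hcof⟩
    · calc P (nextIn D γ) ≤ P γ ⊔ F ⟨γ, hγ⟩ := hnext ⟨γ, hγ⟩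
        _ ≤ T ⟨γ, hγ⟩ ⊔ F ⟨γ, hγ⟩ := sup_le_sup_right (IH ⟨γ, hγ⟩ hγβ) _
        _ ≤ T ⟨nextIn D γ, hβ⟩ :=
          sup_le (hT hγβ.le) (le_sup_of_le_right (le_iSup₂_of_le ⟨γ, hγ⟩ hγβ le_rfl))
    · refine (hcont β (hD.1 hβ) hlim).trans (iSup₂_le fun α hα => ?_)
      obtain ⟨γ, hγ, hαγ, hγβ⟩ := hcof α hα
      calc P α ≤ P γ := hmono α γ hαγ.le (hD.1 hγ)
        _ ≤ T ⟨γ, hγ⟩ := IH ⟨γ, hγ⟩ hγβ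
        _ ≤ T ⟨β, hβ⟩ := hT hγβ.le
  · exact (congrArg P hmin).symm.trans_le le_sup_left

end Club

theorem iSupIndep_of_disjoint_biSup_lt {α ι : Type*} [CompleteLattice α] [IsModularLattice α]
    [IsCompactlyGenerated α] [LinearOrder ι] {f : ι → α}
    (h : ∀ i, Disjoint (f i) (⨆ j < i, f j)) : iSupIndep f := by
  classical
  refine iSupIndep_iff_supIndep.2 fun s => ?_
  induction s using Finset.induction_on_max with
  | empty => exact Finset.supIndep_empty f
  | insert i s hs ih =>
    exact ih.insert ((h i).mono_right (Finset.sup_le fun j hj => le_biSup f (hs j hj)))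

section Module

variable {R A : Type*} [Ring R] [AddCommGroup A] [Module R A]

theorem Module.free_of_iSupIndep {ι : Type*} {G : ι → Submodule R A} (hind : iSupIndep G)
    (htop : iSup G = ⊤) [∀ i, Module.Free R (G i)] : Module.Free R A := by
  classical
  have hint := DirectSum.isInternal_submodule_of_iSupIndep_of_iSup_eq_top hind htop
  exact .of_basis (hint.collectedBasis fun i => Module.Free.chooseBasis R (G i))

theorem Submodule.exists_disjoint_sup_eq_of_projective {N M : Submodule R A} (hNM : N ≤ M)
    [Module.Projective R (M ⧸ N.submoduleOf M)] :
    ∃ F : Submodule R A, Disjoint N F ∧ N ⊔ F = M ∧ Nonempty (F ≃ₗ[R] M ⧸ N.submoduleOf M) := by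
  set π := (N.submoduleOf M).mkQ
  obtain ⟨s, hs⟩ := π.exists_rightInverse_of_surjective (N.submoduleOf M).range_mkQ
  have hπs : ∀ y, π (s y) = y := LinearMap.congr_fun hs
  have hinj : Function.Injective (M.subtype ∘ₗ s) :=
    Subtype.val_injective.comp (Function.LeftInverse.injective hπs)
  refine ⟨LinearMap.range (M.subtype ∘ₗ s), ?_, ?_, ⟨(LinearEquiv.ofInjective _ hinj).symm⟩⟩
  · rw [Submodule.disjoint_def]
    rintro _ hN ⟨y, rfl⟩
    have : π (s y) = 0 := (Submodule.Quotient.mk_eq_zero _).2 hN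
    rw [hπs] at this
    simp [this]
  · refine le_antisymm (sup_le hNM (LinearMap.range_le_iff_comap.2 ?_)) fun x hx => ?_
    · exact eq_top_iff.2 fun y _ => (s y).2
    · have hker : (⟨x, hx⟩ - s (π ⟨x, hx⟩) : M) ∈ N.submoduleOf M := by
        rw [← Submodule.Quotient.mk_eq_zero, ← Submodule.mkQ_apply, map_sub, hπs, sub_self]
      exact Submodule.mem_sup.2 ⟨_, hker, _, ⟨π ⟨x, hx⟩, rfl⟩, by simp⟩

theorem Submodule.exists_injective_quotient_submoduleOf (N M : Submodule R A) :
    ∃ f : (M ⧸ N.submoduleOf M) →ₗ[R] A ⧸ N, Function.Injective f := by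
  have hker : N.submoduleOf M = LinearMap.ker (N.mkQ ∘ₗ M.subtype) := by
    rw [LinearMap.ker_comp, Submodule.ker_mkQ]
    rfl
  exact ⟨_, LinearMap.ker_eq_bot.1 (Submodule.ker_liftQ_eq_bot' _ _ hker)⟩

end Module

theorem Submodule.free_of_isClubIn {R A : Type*} [Ring R] [AddCommGroup A] [Module R A]
    {D : Set Ordinal} {o : Ordinal} (hD : IsClubIn D o) (ho : IsSuccLimit o)
    {P : Ordinal → Submodule R A} (hmono : ∀ α β, α ≤ β → β < o → P α ≤ P β)
    (hcont : ∀ β < o, IsSuccLimit β → P β ≤ ⨆ α < β, P α) (htop : ⨆ α < o, P α = ⊤)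
    (hfree₀ : Module.Free R (P (sInf D)))
    (hfree : ∀ β ∈ D, Module.Free R (P (nextIn D β) ⧸ (P β).submoduleOf (P (nextIn D β)))) :
    Module.Free R A := by
  have hcompl : ∀ γ : D, ∃ F : Submodule R A,
      Disjoint (P γ) F ∧ P γ ⊔ F = P (nextIn D γ) ∧ Module.Free R F := by
    rintro ⟨γ, hγ⟩
    obtain ⟨δ, hδ, hγδ⟩ := hD.exists_gt ho (hD.1 hγ)
    have hnext := nextIn_mem_of_lt hδ hγδ
    have := hfree γ hγ
    obtain ⟨F, hdisj, hsup, ⟨e⟩⟩ :=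
      exists_disjoint_sup_eq_of_projective (hmono _ _ hnext.2.le (hD.1 hnext.1))
    exact ⟨F, hdisj, hsup, .of_equiv e.symm⟩
  choose F hFdisj hFsup hFfree using hcompl
  let G : WithBot D → Submodule R A := WithBot.recBotCoe (P (sInf D)) F
  have hG_lt : ∀ γ : D, ⨆ i < (γ : WithBot D), G i ≤ P γ := by
    refine fun γ => iSup₂_le fun i hi => ?_
    induction i using WithBot.recBotCoe with
    | bot => exact hmono _ _ (csInf_le' γ.2) (hD.1 γ.2)
    | coe δ =>
      calc F δ ≤ P (nextIn D δ) := hFsup δ ▸ le_sup_right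
        _ ≤ P γ := hmono _ _ (nextIn_le γ.2 (show δ < γ from WithBot.coe_lt_coe.1 hi)) (hD.1 γ.2)
  have hind : iSupIndep G := iSupIndep_of_disjoint_biSup_lt fun i => by
    induction i using WithBot.recBotCoe with
    | bot => simp
    | coe γ => exact (hFdisj γ).symm.mono_right (hG_lt γ)
  have hspan : iSup G = ⊤ := by
    refine eq_top_iff.2 (htop ▸ iSup₂_le fun α hα => ?_)
    obtain ⟨β, hβ, hαβ⟩ := hD.2.1 α hα
    calc P α ≤ P β := hmono α β hαβ (hD.1 hβ)
      _ ≤ P (sInf D) ⊔ ⨆ (γ : D) (_ : γ < ⟨β, hβ⟩), F γ :=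
        hD.le_sup_iSup hmono hcont (fun γ => (hFsup γ).ge) ⟨β, hβ⟩
      _ ≤ iSup G := sup_le (le_iSup G ⊥) (iSup₂_le fun γ _ => le_iSup G γ)
  have : ∀ i, Module.Free R (G i) := WithBot.recBotCoe hfree₀ hFfree
  exact Module.free_of_iSupIndep hind hspan

theorem AddSubgroup.cardinalMk_closure_le_max {A : Type*} [AddCommGroup A] (s : Set A) :
    #(closure s) ≤ max #s ℵ₀ := by
  have hrange : (closure s : Set A) = Set.range (Finsupp.linearCombination ℤ ((↑) : s → A)) := by
    rw [← Submodule.span_int_eq_addSubgroupClosure, Submodule.coe_toAddSubgroup,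
      ← LinearMap.coe_range, Finsupp.range_linearCombination, Subtype.range_coe]
  show #(closure s : Set A) ≤ _
  rw [hrange]
  refine mk_range_le.trans ?_
  rcases isEmpty_or_nonempty s with hs | hs
  · exact le_max_of_le_right mk_le_aleph0
  · simp [mk_finsupp_lift_of_infinite']

theorem AddSubgroup.exists_lt_mem_of_mem_biSup {A : Type*} [AddCommGroup A] {o : Ordinal}
    (ho : 0 < o) {C : Ordinal → AddSubgroup A} (hmono : ∀ α β, α ≤ β → β < o → C α ≤ C β)
    {x : A} (hx : x ∈ ⨆ α < o, C α) : ∃ α < o, x ∈ C α := by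
  rw [iSup_subtype'] at hx
  have : Nonempty (Set.Iio o) := ⟨⟨0, ho⟩⟩
  have hdir : Directed (· ≤ ·) fun α : Set.Iio o => C α := fun α β =>
    (le_total α β).elim (fun h => ⟨β, hmono _ _ h β.2, le_rfl⟩)
      fun h => ⟨α, le_rfl, hmono _ _ h α.2⟩
  obtain ⟨⟨α, hα⟩, h⟩ := (mem_iSup_of_directed hdir).1 hx
  exact ⟨α, hα, h⟩

structure IsKappaFiltration (κ : Cardinal.{u}) {A : Type u} [AddCommGroup A]
    (C : Ordinal.{u} → AddSubgroup A) : Prop where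
  card_lt : ∀ α < κ.ord, #(C α) < κ
  mono : ∀ α β, α ≤ β → β < κ.ord → C α ≤ C β
  continuous : ∀ β < κ.ord, IsSuccLimit β → C β = ⨆ α < β, C α
  iSup_eq_top : ⨆ α < κ.ord, C α = ⊤

theorem exists_isKappaFiltration {κ : Cardinal.{u}} (hunc : ℵ₀ < κ) {A : Type u} [AddCommGroup A]
    (hcard : #A = κ) : ∃ C : Ordinal → AddSubgroup A, IsKappaFiltration κ C := by
  obtain ⟨r, _, hr⟩ := exists_ord_eq A
  rw [hcard] at hr
  have ho := isSuccLimit_ord hunc.le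
  let C α := AddSubgroup.closure {a | Ordinal.typein r a < α}
  refine ⟨C, fun α hα => ?_, fun α β h _ => AddSubgroup.closure_mono fun a ha => ?_,
    fun β hβ hlim => ?_, ?_⟩
  · refine (AddSubgroup.cardinalMk_closure_le_max _).trans_lt (max_lt ?_ hunc)
    have hα' : α < Ordinal.type r := hr ▸ hα
    set a₀ := Ordinal.enum r ⟨α, hα'⟩
    have ha₀ : Ordinal.typein r a₀ = α := Ordinal.typein_enum r hα'
    have : {a | Ordinal.typein r a < α} = {a | r a a₀} := by
      ext a
      rw [Set.mem_ofPred_eq, Set.mem_ofPred_eq, ← Ordinal.typein_lt_typein r, ha₀]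
    calc #{a | Ordinal.typein r a < α} = #{a // r a a₀} := by rw [this]; rfl
      _ = α.card := by rw [← Ordinal.card_typein, ha₀]
      _ < κ := lt_ord.1 hα
  · exact lt_of_lt_of_le (show Ordinal.typein r a < α from ha) h
  · have hset : {a | Ordinal.typein r a < β} = ⋃ α < β, {a | Ordinal.typein r a < α} := by
      ext a
      simp only [Set.mem_iUnion, Set.mem_ofPred_eq]
      exact ⟨fun h => ⟨_, hlim.succ_lt h, lt_succ _⟩, fun ⟨α, hα, h⟩ => h.trans hα⟩
    simp only [C, hset, AddSubgroup.closure_iUnion]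
  · refine eq_top_iff.2 fun a _ => ?_
    have hlt : succ (Ordinal.typein r a) < κ.ord :=
      ho.succ_lt (hr ▸ Ordinal.typein_lt_type r a)
    exact le_iSup₂_of_le (f := fun α (_ : α < κ.ord) => C α) _ hlt le_rfl
      (AddSubgroup.subset_closure (lt_succ (Ordinal.typein r a)))

namespace IsKappaFiltration

variable {κ : Cardinal.{u}} {A : Type u} [AddCommGroup A] {C : Ordinal.{u} → AddSubgroup A}

theorem exists_mem (hC : IsKappaFiltration κ C) (hκ : κ ≠ 0) (x : A) : ∃ α < κ.ord, x ∈ C α :=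
  AddSubgroup.exists_lt_mem_of_mem_biSup (ord_pos.2 hκ.bot_lt) hC.mono
    (hC.iSup_eq_top ▸ AddSubgroup.mem_top x)

theorem exists_mem_of_isSuccLimit (hC : IsKappaFiltration κ C) {β : Ordinal} (hβ : β < κ.ord)
    (hlim : IsSuccLimit β) {x : A} (hx : x ∈ C β) : ∃ α < β, x ∈ C α :=
  AddSubgroup.exists_lt_mem_of_mem_biSup hlim.pos
    (fun α γ h hγ => hC.mono α γ h (hγ.trans hβ)) (hC.continuous β hβ hlim ▸ hx)

theorem exists_lt_subset (hC : IsKappaFiltration κ C) (hreg : κ.IsRegular) {t : Set A}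
    (ht : #t < κ) {α₀ : Ordinal} (hα₀ : α₀ < κ.ord) : ∃ β, α₀ < β ∧ β < κ.ord ∧ t ⊆ C β := by
  choose f hf using fun x : t => hC.exists_mem hreg.pos.ne' x
  have hsup : ⨆ x, f x < κ.ord :=
    Ordinal.iSup_lt_of_lt_cof (by rwa [hreg.cof_ord]) fun x => (hf x).1
  have hβ : max (⨆ x, f x) (succ α₀) < κ.ord :=
    max_lt hsup ((isSuccLimit_ord hreg.aleph0_le).succ_lt hα₀)
  refine ⟨_, (lt_succ α₀).trans_le (le_max_right _ _), hβ, fun x hx => ?_⟩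
  refine hC.mono _ _ ?_ hβ (hf ⟨x, hx⟩).2
  exact (le_ciSup Ordinal.bddAbove_of_small (⟨x, hx⟩ : t)).trans (le_max_left _ _)

theorem exists_lt_forall_subset (hC : IsKappaFiltration κ C) (hreg : κ.IsRegular)
    {s : A → Set A} (hs : ∀ x, #(s x) < κ) {α : Ordinal} (hα : α < κ.ord) :
    ∃ β, α < β ∧ β < κ.ord ∧ ∀ x ∈ C α, s x ⊆ C β := by
  have ht : #(⋃ x ∈ (C α : Set A), s x) < κ :=
    (card_biUnion_lt_iff_forall_of_isRegular hreg (hC.card_lt α hα)).2 fun x _ => hs x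
  obtain ⟨β, hαβ, hβ, hsub⟩ := hC.exists_lt_subset hreg ht hα
  exact ⟨β, hαβ, hβ, fun x hx => (Set.subset_biUnion_of_mem hx).trans hsub⟩

theorem isClubIn_setOf_forall_subset (hC : IsKappaFiltration κ C) (hreg : κ.IsRegular)
    (hunc : ℵ₀ < κ) (s : A → Set A) (hs : ∀ x, #(s x) < κ) :
    IsClubIn {α | α < κ.ord ∧ ∀ x ∈ C α, s x ⊆ C α} κ.ord := by
  refine ⟨fun α h => h.1, fun α₀ hα₀ => ?_, fun S hS hne hlt hlim => ⟨hlt, fun x hx => ?_⟩⟩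
  · choose! f hf using fun α (hα : α < κ.ord) => hC.exists_lt_forall_subset hreg hs hα
    obtain ⟨β, hβ, hlim, hfβ, hcof⟩ := Ordinal.exists_isSuccLimit_iterate hreg hunc
      (fun α hα => ⟨(hf α hα).1, (hf α hα).2.1⟩) hα₀
    refine ⟨β, ⟨hβ, fun x hx => ?_⟩, (hfβ 0).le⟩
    obtain ⟨α, hαβ, hxα⟩ := hC.exists_mem_of_isSuccLimit hβ hlim hx
    obtain ⟨n, hn⟩ := hcof α hαβ
    have hn' : f^[n] α₀ < κ.ord := (hfβ n).trans hβ
    refine ((hf _ hn').2.2 x (hC.mono _ _ hn.le hn' hxα)).trans (hC.mono _ _ ?_ hβ)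
    exact (Function.iterate_succ_apply' f n α₀ ▸ hfβ (n + 1)).le
  · have hbdd : BddAbove S := ⟨κ.ord, fun γ hγ => (hS hγ).1.le⟩
    obtain ⟨α, hα, hxα⟩ := hC.exists_mem_of_isSuccLimit hlt hlim hx
    obtain ⟨γ, hγ, hαγ⟩ := exists_lt_of_lt_csSup hne hα
    have hγσ := le_csSup hbdd hγ
    exact ((hS hγ).2 x (hC.mono _ _ hαγ.le (hS hγ).1 hxα)).trans (hC.mono _ _ hγσ hlt)

theorem exists_isClubIn_isKappaFree_quotient (hC : IsKappaFiltration κ C) (hreg : κ.IsRegular)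
    (hunc : ℵ₀ < κ) (hA : IsKappaFree κ A) [Module.Free ℤ A] :
    ∃ D, IsClubIn D κ.ord ∧ ∀ α ∈ D, IsKappaFree κ (A ⧸ C α) := by
  let b := Module.Free.chooseBasis ℤ A
  refine ⟨_, hC.isClubIn_setOf_forall_subset hreg hunc (fun x => b '' (b.repr x).support)
    fun x => (mk_image_le.trans_lt ((Finset.finite_toSet _).lt_aleph0.trans hunc)), ?_⟩
  rintro α ⟨-, hα⟩
  exact hA.quotient_of_basis b (C α) fun x hx i hi => hα x hx ⟨i, hi, rfl⟩

theorem free_of_isClubIn (hC : IsKappaFiltration κ C) (hreg : κ.IsRegular)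
    (hA : IsKappaFree κ A) {D : Set Ordinal} (hD : IsClubIn D κ.ord)
    (hquot : ∀ α ∈ D, IsKappaFree κ (A ⧸ C α)) : Module.Free ℤ A := by
  have ho := isSuccLimit_ord hreg.aleph0_le
  let P α := AddSubgroup.toIntSubmodule (C α)
  refine Submodule.free_of_isClubIn hD ho (P := P)
    (fun α β h hβ => AddSubgroup.toIntSubmodule.monotone (hC.mono α β h hβ))
    (fun β hβ hlim => (congrArg _ (hC.continuous β hβ hlim)).trans_le (map_iSup₂ _ _).le)
    (by rw [← map_iSup₂, hC.iSup_eq_top, map_top])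
    (hA _ (hC.card_lt _ (hD.1 (csInf_mem (hD.nonempty ho.pos))))) fun β hβ => ?_
  obtain ⟨δ, hδ, hβδ⟩ := hD.exists_gt ho (hD.1 hβ)
  set γ := nextIn D β
  obtain ⟨f, hf⟩ := Submodule.exists_injective_quotient_submoduleOf (P β) (P γ)
  exact ((hquot β hβ).of_injective f.toAddMonoidHom hf).free
    ((mk_le_of_surjective (Submodule.mkQ_surjective _)).trans_lt
      (hC.card_lt γ (hD.1 (nextIn_mem_of_lt hδ hβδ).1)))

end IsKappaFiltration

/-- For an uncountable regular cardinal `κ` and a `κ`-free Abelian group `A`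
of cardinality `κ`, `A` is free if and only if for every representation of
`A` as the union of a continuous increasing chain of subgroups of cardinality
`< κ` indexed by the ordinals below `κ`, the set of indices `α` with `A ⧸ A α`
`κ`-free contains a club. -/
theorem free_iff_club_of_kappa_free
    (κ : Cardinal) (hreg : κ.IsRegular) (hunc : Cardinal.aleph0 < κ)
    (A : Type*) [AddCommGroup A] (hcard : Cardinal.mk A = κ)
    (hkfree : IsKappaFree κ A) :
    Module.Free ℤ A ↔
      ∀ C : Ordinal → AddSubgroup A,
        (∀ α < κ.ord, Cardinal.mk (C α) < κ) →
        (∀ α β, α ≤ β → β < κ.ord → C α ≤ C β) →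
        (∀ β < κ.ord, Order.IsSuccLimit β → C β = ⨆ α < β, C α) →
        (⨆ α < κ.ord, C α) = ⊤ →
        ∃ D : Set Ordinal,
          IsClubIn D κ.ord ∧
          ∀ α ∈ D, IsKappaFree κ (A ⧸ C α) := by
  refine ⟨fun _ C hcardC hmono hcont htop => ?_, fun H => ?_⟩
  · exact IsKappaFiltration.exists_isClubIn_isKappaFree_quotient ⟨hcardC, hmono, hcont, htop⟩
      hreg hunc hkfree
  · obtain ⟨C, hC⟩ := exists_isKappaFiltration hunc hcard
    obtain ⟨D, hD, hquot⟩ := H C hC.card_lt hC.mono hC.continuous hC.iSup_eq_top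
    exact hC.free_of_isClubIn hreg hkfree hD hquot
end

section
/- The additive subgroup of the Banach space L^∞([0,1]) (with Lebesgue measure) consisting of (equivalence classes of) essentially bounded measurable functions that are almost everywhere integer-valued is a free Abelian group, i.e., a free ℤ-module. -/
/-!
An essentially bounded, almost everywhere integer-valued function takes only finitely many values
up to a null set. Let `S` be the Stone space of the measure algebra, i.e. the Boolean
homomorphisms from measurable sets to `Bool` that kill null sets. Each such function `f` then
defines a locally constant function on `S`, sending `x` to the unique `n` with `x {f = n} = ⊤`.
This gives an isomorphism onto `C(S, ℤ)`. It is injective because every set of positive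
measure is charged by a point of `S` (an ultrafilter finer than the almost-everywhere filter).
It is surjective because every clopen subset of `S` is of the form `{x | x E = ⊤}`.
As `S` is profinite, `C(S, ℤ)` is free by Nöbeling's theorem.
-/

open MeasureTheory

section StoneSpace

variable {α : Type*} [BooleanAlgebra α]

/-- The Stone space of the quotient of `α` by the ideal generated by `N`. -/
def stoneSpace (N : Set α) : Set (α → Bool) :=
  {x | (∀ a b, x (a ⊔ b) = x a ⊔ x b) ∧ (∀ a b, x (a ⊓ b) = x a ⊓ x b) ∧ x ⊤ = ⊤ ∧ x ⊥ = ⊥ ∧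
    ∀ a ∈ N, x a = ⊥}

variable {N : Set α}

namespace stoneSpace

instance : FunLike (stoneSpace N) α Bool where
  coe := Subtype.val
  coe_injective := Subtype.val_injective

instance : BoundedLatticeHomClass (stoneSpace N) α Bool where
  map_sup x := x.2.1
  map_inf x := x.2.2.1
  map_top x := x.2.2.2.1
  map_bot x := x.2.2.2.2.1

lemma apply_eq_bot (x : stoneSpace N) {a : α} (ha : a ∈ N) : x a = ⊥ := x.2.2.2.2.2 a ha

lemma isClosed : IsClosed (stoneSpace N) := by
  have hcont : ∀ a, Continuous fun x : α → Bool => x a := _root_.continuous_apply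
  simp only [stoneSpace, Set.ofPred_and, Set.ofPred_forall]
  refine .inter ?_ (.inter ?_ (.inter ?_ (.inter ?_ ?_)))
  · exact isClosed_iInter fun a => isClosed_iInter fun b => isClosed_eq (hcont _) (by fun_prop)
  · exact isClosed_iInter fun a => isClosed_iInter fun b => isClosed_eq (hcont _) (by fun_prop)
  · exact isClosed_eq (hcont _) continuous_const
  · exact isClosed_eq (hcont _) continuous_const
  · exact isClosed_biInter fun a _ => isClosed_eq (hcont _) continuous_const

instance : CompactSpace (stoneSpace N) := isCompact_iff_compactSpace.mp isClosed.isCompact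

lemma continuous_apply (a : α) : Continuous fun x : stoneSpace N => x a :=
  (_root_.continuous_apply a).comp continuous_subtype_val

lemma isClopen_setOf_apply_eq_top (a : α) : IsClopen {x : stoneSpace N | x a = ⊤} :=
  (isClopen_discrete {⊤}).preimage (continuous_apply a)

lemma exists_apply_eq_top_subset {U : Set (stoneSpace N)} (hU : IsOpen U) {x : stoneSpace N}
    (hx : x ∈ U) : ∃ a, x a = ⊤ ∧ {y : stoneSpace N | y a = ⊤} ⊆ U := by
  obtain ⟨V, hV, rfl⟩ := isOpen_induced_iff.mp hU
  obtain ⟨I, u, hIu, hIV⟩ := isOpen_pi_iff.mp hV x.1 hx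
  classical
  let literal : α → α := fun i => if x i then i else iᶜ
  have hliteral : ∀ (y : stoneSpace N) i, y (literal i) = ⊤ ↔ y i = x i := by
    intro y i
    by_cases h : x i <;> simp [literal, h]
  refine ⟨I.inf literal, ?_, fun y hy => hIV fun i hi => ?_⟩
  · rw [map_finset_inf, Finset.inf_eq_top_iff]
    exact fun i _ => (hliteral x i).2 rfl
  · rw [Set.mem_ofPred_eq, map_finset_inf, Finset.inf_eq_top_iff] at hy
    change y i ∈ u i
    rw [(hliteral y i).1 (hy i hi)]
    exact (hIu i hi).2

lemma exists_eq_setOf_of_isClopen {C : Set (stoneSpace N)} (hC : IsClopen C) :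
    ∃ a, C = {x : stoneSpace N | x a = ⊤} := by
  choose! b hxb hbC using fun x (hx : x ∈ C) => exists_apply_eq_top_subset hC.isOpen hx
  obtain ⟨t, htC, hCt⟩ := hC.isClosed.isCompact.elim_nhds_subcover
    (fun x => {y : stoneSpace N | y (b x) = ⊤})
    (fun x hx => (isClopen_setOf_apply_eq_top _).isOpen.mem_nhds (hxb x hx))
  refine ⟨t.sup b, Set.Subset.antisymm (fun x hx => ?_) fun x hx => ?_⟩
  · obtain ⟨y, hy, hxy⟩ := Set.mem_iUnion₂.mp (hCt hx)
    exact top_le_iff.mp (hxy ▸ OrderHomClass.mono x (Finset.le_sup hy))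
  · rw [Set.mem_ofPred_eq, map_finset_sup, Finset.sup_eq_top_iff] at hx
    obtain ⟨y, hy, hxy⟩ := hx
    exact hbC y (htC y hy) hxy

end stoneSpace

end StoneSpace

lemma LocallyConstant.mem_of_forall_charFn_mem {S : Type*} [TopologicalSpace S] [CompactSpace S]
    {G : AddSubgroup (LocallyConstant S ℤ)} (hG : ∀ C (hC : IsClopen C), charFn ℤ hC ∈ G)
    (g : LocallyConstant S ℤ) : g ∈ G := by
  classical
  have hg : g = ∑ n ∈ g.range_finite.toFinset,
      n • charFn ℤ (g.isLocallyConstant.isClopen_fiber n) := by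
    ext x
    rw [← LocallyConstant.evalₗ_apply ℤ x (∑ n ∈ _, _), map_sum, Finset.sum_eq_single (g x)]
    all_goals simp only [LocallyConstant.evalₗ_apply, LocallyConstant.coe_smul, Pi.smul_apply,
      LocallyConstant.coe_charFn]
    · simp
    · intro n _ hn
      simp [Ne.symm hn]
    · simp
  rw [hg]
  exact G.sum_mem fun n _ => G.zsmul_mem (hG _ _) n

section MeasureAlgebra

variable {X : Type*} [MeasurableSpace X] {μ : Measure X}

variable (μ) in
abbrev measureStoneSpace : Set ({s : Set X // MeasurableSet s} → Bool) :=
  stoneSpace {E | μ E = 0}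

namespace measureStoneSpace

lemma apply_eq_top_of_ae_le (x : measureStoneSpace μ) {E F : {s : Set X // MeasurableSet s}}
    (hEF : (E : Set X) ≤ᵐ[μ] (F : Set X)) (hE : x E = ⊤) : x F = ⊤ := by
  have hdiff : x (E \ F) = ⊥ := stoneSpace.apply_eq_bot x (ae_le_set.mp hEF)
  have := OrderHomClass.mono x (le_sup_sdiff : E ≤ F ⊔ E \ F)
  rwa [hE, map_sup x, hdiff, sup_bot_eq, top_le_iff] at this

open Classical in
noncomputable def ofUltrafilter (U : Ultrafilter X) (hU : ↑U ≤ ae μ) : measureStoneSpace μ :=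
  ⟨fun E => decide ((E : Set X) ∈ U), by
    refine ⟨fun E F => ?_, fun E F => ?_, ?_, ?_, fun E hE => ?_⟩
    · simp [Ultrafilter.union_mem_iff]
    · simp [← Ultrafilter.mem_coe, Filter.inter_mem_iff]
    · simp [← Ultrafilter.mem_coe, Filter.univ_mem]
    · simp
    · exact decide_eq_false (Ultrafilter.compl_mem_iff_notMem.mp
        (hU (measure_eq_zero_iff_ae_notMem.mp hE)))⟩

lemma exists_apply_eq_top {E : {s : Set X // MeasurableSet s}} (hE : μ E ≠ 0) :
    ∃ x : measureStoneSpace μ, x E = ⊤ := by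
  have : Filter.NeBot (ae (μ.restrict E)) := ae_neBot.mpr (by simpa using hE)
  let U := Ultrafilter.of (ae (μ.restrict E))
  refine ⟨ofUltrafilter U ((Ultrafilter.of_le _).trans ae_restrict_le), ?_⟩
  have : (E : Set X) ∈ U := Ultrafilter.of_le _ (ae_restrict_mem E.2)
  classical exact decide_eq_true this

end measureStoneSpace

variable (μ) in
def integerValuedLp : AddSubgroup (Lp ℝ ⊤ μ) where
  carrier := {f | ∀ᵐ t ∂μ, ∃ n : ℤ, f t = n}
  zero_mem' := by
    filter_upwards [Lp.coeFn_zero ℝ ⊤ μ] with t ht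
    exact ⟨0, by rw [ht, Pi.zero_apply, Int.cast_zero]⟩
  add_mem' {f g} hf hg := by
    filter_upwards [hf, hg, Lp.coeFn_add f g] with t ⟨n, hn⟩ ⟨m, hm⟩ ht
    exact ⟨n + m, by rw [ht, Pi.add_apply, hn, hm, Int.cast_add]⟩
  neg_mem' {f} hf := by
    filter_upwards [hf, Lp.coeFn_neg f] with t ⟨n, hn⟩ ht
    exact ⟨-n, by rw [ht, Pi.neg_apply, hn, Int.cast_neg]⟩

lemma exists_finset_ae_mem_of_mem_integerValuedLp {f : Lp ℝ ⊤ μ} (hf : f ∈ integerValuedLp μ) :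
    ∃ s : Finset ℤ, ∀ᵐ t ∂μ, ∃ n ∈ s, f t = n := by
  set C := lpNorm f ⊤ μ
  refine ⟨Finset.Icc (-⌈C⌉) ⌈C⌉, ?_⟩
  filter_upwards [hf, ae_le_lpNorm_exponent_top (Lp.memLp f)] with t ⟨n, hn⟩ hC
  refine ⟨n, Finset.mem_Icc.mpr ?_, hn⟩
  rw [hn, Real.norm_eq_abs, abs_le] at hC
  have hceil := Int.le_ceil C
  constructor
  · have : ((-⌈C⌉ : ℤ) : ℝ) ≤ n := by push_cast; linarith
    exact_mod_cast this
  · exact_mod_cast hC.2.trans hceil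

def levelSet (f : Lp ℝ ⊤ μ) (n : ℤ) : {s : Set X // MeasurableSet s} :=
  ⟨f ⁻¹' {(n : ℝ)}, (Lp.stronglyMeasurable f).measurable (measurableSet_singleton _)⟩

lemma existsUnique_apply_levelSet_eq_top (f : integerValuedLp μ) (x : measureStoneSpace μ) :
    ∃! n : ℤ, x (levelSet f.1 n) = ⊤ := by
  obtain ⟨s, hs⟩ := exists_finset_ae_mem_of_mem_integerValuedLp f.2
  have hsup : x (s.sup (levelSet f.1)) = ⊤ := by
    refine measureStoneSpace.apply_eq_top_of_ae_le x (E := ⊤) ?_ (map_top x)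
    filter_upwards [hs] with t ⟨n, hn, ht⟩ _
    exact Finset.le_sup (f := levelSet f.1) hn ht
  rw [map_finset_sup, Finset.sup_eq_top_iff] at hsup
  obtain ⟨n, -, hn : x (levelSet f.1 n) = ⊤⟩ := hsup
  refine ⟨n, hn, fun m (hm : x (levelSet f.1 m) = ⊤) => ?_⟩
  by_contra hmn
  have hdisj : levelSet f.1 m ⊓ levelSet f.1 n = ⊥ := by
    refine Subtype.ext (Set.eq_empty_of_forall_notMem fun t ⟨htm, htn⟩ => hmn ?_)
    exact_mod_cast (htm : f.1 t = m).symm.trans htn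
  have := congrArg x hdisj
  rw [map_inf x, hm, hn, inf_idem, map_bot] at this
  exact top_ne_bot this

noncomputable def stoneEval (f : integerValuedLp μ) (x : measureStoneSpace μ) : ℤ :=
  (existsUnique_apply_levelSet_eq_top f x).exists.choose

lemma stoneEval_eq_iff {f : integerValuedLp μ} {x : measureStoneSpace μ} {n : ℤ} :
    stoneEval f x = n ↔ x (levelSet f.1 n) = ⊤ :=
  ⟨fun h => h ▸ (existsUnique_apply_levelSet_eq_top f x).exists.choose_spec,
    fun h => (existsUnique_apply_levelSet_eq_top f x).unique
      (existsUnique_apply_levelSet_eq_top f x).exists.choose_spec h⟩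

lemma stoneEval_add (f g : integerValuedLp μ) (x : measureStoneSpace μ) :
    stoneEval (f + g) x = stoneEval f x + stoneEval g x := by
  have hf := stoneEval_eq_iff.mp (rfl : stoneEval f x = _)
  have hg := stoneEval_eq_iff.mp (rfl : stoneEval g x = _)
  have hfg : x (levelSet f.1 (stoneEval f x) ⊓ levelSet g.1 (stoneEval g x)) = ⊤ := by
    rw [map_inf x, hf, hg, inf_idem]
  refine stoneEval_eq_iff.mpr (measureStoneSpace.apply_eq_top_of_ae_le x ?_ hfg)
  filter_upwards [Lp.coeFn_add f.1 g.1] with t ht ⟨htf, htg⟩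
  change (f + g).1 t = ((stoneEval f x + stoneEval g x : ℤ) : ℝ)
  rw [AddSubgroup.coe_add, ht, Pi.add_apply, htf, htg, Int.cast_add]

lemma isLocallyConstant_stoneEval (f : integerValuedLp μ) : IsLocallyConstant (stoneEval f) :=
  IsLocallyConstant.iff_isOpen_fiber.mpr fun n => by
    simpa only [Set.preimage, Set.mem_singleton_iff, stoneEval_eq_iff] using
      (stoneSpace.isClopen_setOf_apply_eq_top (levelSet f.1 n)).isOpen

variable (μ) in
noncomputable def toLocallyConstant :
    integerValuedLp μ →+ LocallyConstant (measureStoneSpace μ) ℤ :=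
  AddMonoidHom.mk' (fun f => ⟨stoneEval f, isLocallyConstant_stoneEval f⟩)
    fun f g => LocallyConstant.ext (stoneEval_add f g)

lemma toLocallyConstant_injective : Function.Injective (toLocallyConstant μ) := by
  refine (injective_iff_map_eq_zero _).mpr fun f hf => ?_
  have hnull : ∀ n ≠ 0, μ (levelSet f.1 n) = 0 := fun n hn => by
    by_contra hpos
    obtain ⟨x, hx⟩ := measureStoneSpace.exists_apply_eq_top hpos
    exact hn ((stoneEval_eq_iff.mpr hx).symm.trans (LocallyConstant.congr_fun hf x))
  refine Subtype.ext (Lp.eq_zero_iff_ae_eq_zero.mpr ?_)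
  have hne : ∀ᵐ t ∂μ, ∀ n : ℤ, n ≠ 0 → f.1 t ≠ n :=
    ae_all_iff.mpr fun n => by
      rcases eq_or_ne n 0 with rfl | hn
      · exact .of_forall fun _ h => absurd rfl h
      · exact (measure_eq_zero_iff_ae_notMem.mp (hnull n hn)).mono fun _ ht _ => ht
  filter_upwards [f.2, hne] with t ⟨n, hn⟩ hne
  obtain rfl : n = 0 := by_contra fun h => hne n h hn
  rw [hn, Int.cast_zero, Pi.zero_apply]

variable (μ) in
noncomputable def indicatorLp (E : {s : Set X // MeasurableSet s}) : integerValuedLp μ :=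
  ⟨((memLp_top_const (1 : ℝ)).indicator E.2).toLp _, by
    filter_upwards [((memLp_top_const (1 : ℝ)).indicator E.2).coeFn_toLp] with t ht
    by_cases htE : t ∈ (E : Set X)
    · exact ⟨1, by simp [ht, htE]⟩
    · exact ⟨0, by simp [ht, htE]⟩⟩

lemma toLocallyConstant_indicatorLp (E : {s : Set X // MeasurableSet s}) :
    toLocallyConstant μ (indicatorLp μ E) =
      LocallyConstant.charFn ℤ (stoneSpace.isClopen_setOf_apply_eq_top E) := by
  have hcoe := ((memLp_top_const (1 : ℝ)).indicator (μ := μ) E.2).coeFn_toLp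
  ext x
  rw [LocallyConstant.coe_charFn]
  change stoneEval _ x = _
  by_cases hx : x E = ⊤
  · rw [Set.indicator_of_mem (s := {y : measureStoneSpace μ | y E = ⊤}) hx, Pi.one_apply,
      stoneEval_eq_iff]
    refine measureStoneSpace.apply_eq_top_of_ae_le x ?_ hx
    filter_upwards [hcoe] with t ht (htE : t ∈ (E : Set X))
    change _ = ((1 : ℤ) : ℝ)
    simp [indicatorLp, ht, htE]
  · have hxc : x Eᶜ = ⊤ := by
      rw [map_compl' x]
      revert hx
      cases x E <;> decide
    rw [Set.indicator_of_notMem (s := {y : measureStoneSpace μ | y E = ⊤}) hx,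
      stoneEval_eq_iff]
    refine measureStoneSpace.apply_eq_top_of_ae_le x ?_ hxc
    filter_upwards [hcoe] with t ht (htE : t ∉ (E : Set X))
    change _ = ((0 : ℤ) : ℝ)
    simp [indicatorLp, ht, htE]

lemma toLocallyConstant_surjective : Function.Surjective (toLocallyConstant μ) := by
  intro g
  refine AddMonoidHom.mem_range.mp (LocallyConstant.mem_of_forall_charFn_mem (fun C hC => ?_) g)
  obtain ⟨E, rfl⟩ := stoneSpace.exists_eq_setOf_of_isClopen hC
  exact ⟨indicatorLp μ E, toLocallyConstant_indicatorLp E⟩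

variable (μ) in
theorem free_integerValuedLp : Module.Free ℤ (integerValuedLp μ) :=
  have := LocallyConstant.freeOfProfinite (Profinite.of (measureStoneSpace μ))
  .of_equiv (LinearEquiv.ofBijective (toLocallyConstant μ).toIntLinearMap
    ⟨toLocallyConstant_injective, toLocallyConstant_surjective⟩).symm

end MeasureAlgebra

/-- The subgroup of the Banach space `L^∞([0,1])` (with Lebesgue measure)
consisting of (equivalence classes of) essentially bounded measurable
functions that are almost everywhere integer-valued is a free Abelian group,
i.e., a free `ℤ`-module. -/
theorem integerValued_Linfty_subgroup_free
    (A : AddSubgroup (Lp ℝ ⊤ (volume : Measure (Set.Icc (0:ℝ) 1))))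
    (hA : ∀ f : Lp ℝ ⊤ (volume : Measure (Set.Icc (0:ℝ) 1)),
      f ∈ A ↔ ∀ᵐ t ∂(volume : Measure (Set.Icc (0:ℝ) 1)), ∃ n : ℤ, f t = (n : ℝ)) :
    Module.Free ℤ A := by
  obtain rfl : A = integerValuedLp volume := AddSubgroup.ext hA
  exact free_integerValuedLp volume
end
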